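/- arXiv:1212.0713 — 3 statements merged into one kernel-verified Lean document; each statement's English description precedes it below -/
import Mathlib

section
/- Let V be a finite-dimensional complex inner product space regarded as a real inner product space via the real part ⟨·,·⟩ of its Hermitian inner product, J multiplication by i, and U a real subspace of V satisfying J(U) ∩ U^⊥ = {0}. Then the symmetric operator G² = G ∘ G : U → U is negative definite: for every u ∈ U with u ≠ 0 one has ⟨G²(u), u⟩ < 0. -/
open scoped RealInnerProductSpace

/-- A complex inner product space regarded as a real inner product space via the real
part of its Hermitian inner product. -/
noncomputable instance {V : Type*} [NormedAddCommGroup V] [InnerProductSpace ℂ V] :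
    InnerProductSpace ℝ V := InnerProductSpace.complexToReal

/-- Multiplication by `i = √-1` as an `ℝ`-linear map `J : V → V`. -/
noncomputable def Jmul (V : Type*) [NormedAddCommGroup V] [InnerProductSpace ℂ V] :
    V →ₗ[ℝ] V :=
  LinearMap.restrictScalars ℝ (Complex.I • (LinearMap.id : V →ₗ[ℂ] V))

/-- The operator `G : U → U`, `G(u) = p_U(J(u))`, where `p_U` is the orthogonal
projection of `V` onto the real subspace `U`. -/
noncomputable def Gop {V : Type*} [NormedAddCommGroup V] [InnerProductSpace ℂ V]
    [FiniteDimensional ℂ V] (U : Submodule ℝ V) : U →ₗ[ℝ] U :=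
  letI : FiniteDimensional ℝ V := FiniteDimensional.trans ℝ ℂ V
  (U.orthogonalProjection).toLinearMap ∘ₗ (Jmul V) ∘ₗ U.subtype

lemma Jmul_apply {V : Type*} [NormedAddCommGroup V] [InnerProductSpace ℂ V] (v : V) :
    Jmul V v = Complex.I • v := rfl

lemma real_inner_Jmul_left {V : Type*} [NormedAddCommGroup V] [InnerProductSpace ℂ V]
    (v w : V) : ⟪Jmul V v, w⟫ = -⟪v, Jmul V w⟫ := by
  show (inner ℂ (Complex.I • v) w : ℂ).re = -(inner ℂ v (Complex.I • w) : ℂ).re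
  rw [inner_smul_left, inner_smul_right]
  simp [Complex.mul_re]

/-- If the real subspace `U` satisfies `J(U) ∩ U^⊥ = {0}`, then the symmetric operator
`G² = G ∘ G : U → U` is negative definite: `⟨G²(u), u⟩ < 0` for all `u ≠ 0`. -/
theorem Gop_sq_negDefinite {V : Type*} [NormedAddCommGroup V] [InnerProductSpace ℂ V]
    [FiniteDimensional ℂ V] (U : Submodule ℝ V)
    (hU : U.map (Jmul V) ⊓ Uᗮ = ⊥) :
    ∀ u : U, u ≠ 0 → ⟪Gop U (Gop U u), u⟫ < 0 := by
  letI : FiniteDimensional ℝ V := FiniteDimensional.trans ℝ ℂ V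
  intro u hu
  set g : U := Gop U u with hg
  have key : ⟪Gop U g, u⟫ = -⟪g, g⟫ := by
    have h1 : ⟪Gop U g, u⟫ = ⟪Jmul V (g : V), (u : V)⟫ := by
      simp [Gop]
    have h2 : ⟪(g : V), Jmul V (u : V)⟫ = ⟪g, g⟫ := by
      have := Submodule.inner_orthogonalProjectionOnto_eq_of_mem_left (K := U) g (Jmul V (u : V))
      rw [← this, show (U.orthogonalProjectionOnto) ((Jmul V) (u:V)) = g from rfl]
    rw [h1, real_inner_Jmul_left, h2]
  rw [key]
  have hgne : g ≠ 0 := by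
    intro h0
    apply hu
    have hmem : Jmul V (u : V) ∈ U.map (Jmul V) ⊓ Uᗮ := by
      constructor
      · exact ⟨u, u.2, rfl⟩
      · have : U.orthogonalProjectionOnto (Jmul V (u : V)) = 0 := by
          have : Gop U u = 0 := by rw [← hg]; exact h0
          simpa [Gop] using this
        exact (Submodule.orthogonalProjectionOnto_eq_zero_iff).mp this
    rw [hU] at hmem
    have hJ : Jmul V (u : V) = 0 := hmem
    have : (u : V) = 0 := by
      have := congrArg (fun x => Complex.I⁻¹ • x) hJ
      simpa [Jmul_apply, smul_smul, Complex.I_ne_zero] using this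
    exact Subtype.ext this
  have : (0:ℝ) < ⟪g, g⟫ := by
    rw [real_inner_self_eq_norm_sq]
    exact pow_pos (norm_pos_iff.mpr hgne) 2
  linarith
end

section
/- Let V be a finite-dimensional complex inner product space regarded as a real inner product space via the real part ⟨·,·⟩ of its Hermitian inner product, J multiplication by i, and U a real subspace of V satisfying J(U) ∩ U^⊥ = {0}. Define J_U = R⁻¹ ∘ G : U → U, where R = (-G²)^{1/2}. Then (J_U)² = -Id on U. -/
open scoped RealInnerProductSpace


lemma comm_of_comm_sq {E : Type*} [NormedAddCommGroup E] [InnerProductSpace ℝ E]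
    [FiniteDimensional ℝ E] (R G : E →ₗ[ℝ] E)
    (hRsymm : ∀ u v : E, ⟪R u, v⟫ = ⟪u, R v⟫)
    (hRpos : ∀ u : E, u ≠ 0 → 0 < ⟪R u, u⟫)
    (hcomm : G ∘ₗ (R ∘ₗ R) = (R ∘ₗ R) ∘ₗ G) :
    R ∘ₗ G = G ∘ₗ R := by
  have hsym : R.IsSymmetric := fun u v => hRsymm u v
  set n := Module.finrank ℝ E with hn
  have b := hsym.eigenvectorBasis hn.symm
  -- eigenvalues positive
  have hpos : ∀ i : Fin n, 0 < hsym.eigenvalues hn.symm i := by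
    intro i
    have hb := hsym.apply_eigenvectorBasis hn.symm i
    have hne : hsym.eigenvectorBasis hn.symm i ≠ 0 :=
      (hsym.eigenvectorBasis hn.symm).toBasis.ne_zero i
    have := hRpos _ hne
    rw [hb, real_inner_smul_left, real_inner_self_eq_norm_sq,
      (hsym.eigenvectorBasis hn.symm).orthonormal.1 i] at this
    simpa using this
  -- R + λ injective for λ > 0
  have hinj : ∀ (lam : ℝ), 0 < lam → ∀ z : E, R z + lam • z = 0 → z = 0 := by
    intro lam hlam z hz
    by_contra hzne
    have h1 : ⟪R z + lam • z, z⟫ = 0 := by rw [hz, inner_zero_left]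
    rw [inner_add_left, real_inner_smul_left, real_inner_self_eq_norm_sq] at h1
    have h2 := hRpos z hzne
    have hz0 : 0 < ‖z‖ := norm_pos_iff.mpr hzne
    have h3 : 0 < lam * ‖z‖ ^ 2 := by positivity
    linarith
  apply (hsym.eigenvectorBasis hn.symm).toBasis.ext
  intro i
  simp only [OrthonormalBasis.coe_toBasis, LinearMap.comp_apply]
  set lam := hsym.eigenvalues hn.symm i with hlam
  set v := hsym.eigenvectorBasis hn.symm i with hv
  have hRv : R v = lam • v := hsym.apply_eigenvectorBasis hn.symm i
  have hRRGv : R (R (G v)) = (lam * lam) • G v := by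
    have := congrFun (congrArg DFunLike.coe hcomm) v
    simp only [LinearMap.comp_apply] at this
    rw [← this]
    simp only [hRv, map_smul, smul_smul]
  -- z := R (G v) - lam • G v satisfies (R + lam) z = 0
  have hz : R (G v) - lam • G v = 0 := by
    apply hinj lam (hpos i)
    have : R (R (G v) - lam • G v) + lam • (R (G v) - lam • G v)
        = R (R (G v)) - (lam * lam) • G v := by
      rw [map_sub, map_smul]
      module
    rw [this, hRRGv, sub_self]
  have : R (G v) = lam • G v := by
    have := sub_eq_zero.mp hz
    exact this
  rw [this, hRv, map_smul]

/-- `R = (-G²)^{1/2}` is characterized as the (unique) symmetric positive definite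
operator on `U` whose square is `-G²`; `Rinv` is its inverse, so that
`J_U = R⁻¹ ∘ G = Rinv ∘ₗ Gop U`. -/
theorem JU_sq_eq_neg_id {V : Type*} [NormedAddCommGroup V] [InnerProductSpace ℂ V]
    [FiniteDimensional ℂ V] (U : Submodule ℝ V)
    (hU : U.map (Jmul V) ⊓ Uᗮ = ⊥)
    (R : U →ₗ[ℝ] U)
    (hRsymm : ∀ u v : U, ⟪R u, v⟫ = ⟪u, R v⟫)
    (hRpos : ∀ u : U, u ≠ 0 → 0 < ⟪R u, u⟫)
    (hRsq : R ∘ₗ R = -(Gop U ∘ₗ Gop U))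
    (Rinv : U →ₗ[ℝ] U)
    (hRinv : Rinv ∘ₗ R = LinearMap.id ∧ R ∘ₗ Rinv = LinearMap.id) :
    (Rinv ∘ₗ Gop U) ∘ₗ (Rinv ∘ₗ Gop U) = -LinearMap.id := by
  letI : FiniteDimensional ℝ V := FiniteDimensional.trans ℝ ℂ V
  set G := Gop U with hG
  have hGG : G ∘ₗ G = -(R ∘ₗ R) := by rw [hRsq]; simp
  have hcomm : G ∘ₗ (R ∘ₗ R) = (R ∘ₗ R) ∘ₗ G := by
    rw [hRsq]
    simp only [LinearMap.comp_neg, LinearMap.neg_comp, neg_inj]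
    rw [LinearMap.comp_assoc]
  have hRG : R ∘ₗ G = G ∘ₗ R := comm_of_comm_sq R G hRsymm hRpos hcomm
  -- pass to the endomorphism ring
  have h1 : Rinv * R = 1 := hRinv.1
  have h2 : R * Rinv = 1 := hRinv.2
  have hRG' : R * G = G * R := hRG
  have hGG' : G * G = -(R * R) := hGG
  have hGRinv : G * Rinv = Rinv * G := by
    calc G * Rinv = (Rinv * R) * (G * Rinv) := by rw [h1, one_mul]
      _ = Rinv * ((R * G) * Rinv) := by simp only [mul_assoc]
      _ = Rinv * ((G * R) * Rinv) := by rw [hRG']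
      _ = Rinv * G * (R * Rinv) := by simp only [mul_assoc]
      _ = Rinv * G := by rw [h2, mul_one]
  show (Rinv * G) * (Rinv * G) = -1
  calc (Rinv * G) * (Rinv * G) = Rinv * ((G * Rinv) * G) := by simp only [mul_assoc]
    _ = Rinv * ((Rinv * G) * G) := by rw [hGRinv]
    _ = Rinv * (Rinv * (G * G)) := by simp only [mul_assoc]
    _ = Rinv * (Rinv * (-(R * R))) := by rw [hGG']
    _ = -(Rinv * (Rinv * (R * R))) := by
        exact LinearMap.ext fun x => by simp
    _ = -(Rinv * R) := by rw [show Rinv * (R * R) = R by rw [← mul_assoc, h1, one_mul]]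
    _ = -1 := by rw [h1]
end

section
/- Let V be a finite-dimensional complex inner product space regarded as a real inner product space via the real part ⟨·,·⟩ of its Hermitian inner product, J multiplication by i, and U a real subspace of V satisfying J(U) ∩ U^⊥ = {0}. Then the form ω(u, v) = ⟨J(u), v⟩ tames J_U = R⁻¹ ∘ G: ω(u, J_U(u)) > 0 for every u ∈ U with u ≠ 0. -/
open scoped RealInnerProductSpace

/-- `R = (-G²)^{1/2}` is characterized as the (unique) symmetric positive definite
operator on `U` whose square is `-G²`; `Rinv` is its inverse, so that
`J_U = R⁻¹ ∘ G = Rinv ∘ₗ Gop U`. -/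
theorem omega_tames_JU {V : Type*} [NormedAddCommGroup V] [InnerProductSpace ℂ V]
    [FiniteDimensional ℂ V] (U : Submodule ℝ V)
    (hU : U.map (Jmul V) ⊓ Uᗮ = ⊥)
    (R : U →ₗ[ℝ] U)
    (hRsymm : ∀ u v : U, ⟪R u, v⟫ = ⟪u, R v⟫)
    (hRpos : ∀ u : U, u ≠ 0 → 0 < ⟪R u, u⟫)
    (hRsq : R ∘ₗ R = -(Gop U ∘ₗ Gop U))
    (Rinv : U →ₗ[ℝ] U)
    (hRinv : Rinv ∘ₗ R = LinearMap.id ∧ R ∘ₗ Rinv = LinearMap.id) :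
    ∀ u : U, u ≠ 0 → 0 < ⟪Jmul V (u : V), (↑(Rinv (Gop U u)) : V)⟫ := by
  intro u hu
  letI : FiniteDimensional ℝ V := FiniteDimensional.trans ℝ ℂ V
  -- Step 1: G u ≠ 0
  have hJinj : ∀ x : V, Jmul V x = 0 → x = 0 := by
    intro x hx
    have : Jmul V (Jmul V x) = -x := by
      simp [Jmul, smul_smul, Complex.I_mul_I]
    rw [hx] at this
    simpa using this.symm
  have hGu : Gop U u ≠ 0 := by
    intro h
    have hmem : Jmul V (u : V) ∈ Uᗮ := by
      have := congrArg (Submodule.subtype U) h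
      simp only [Gop, LinearMap.comp_apply, Submodule.subtype_apply] at this ⊢
      exact (Submodule.orthogonalProjectionOnto_eq_zero_iff).mp (by exact_mod_cast h)
    have hmem2 : Jmul V (u : V) ∈ U.map (Jmul V) := ⟨u, u.2, rfl⟩
    have : Jmul V (u : V) ∈ U.map (Jmul V) ⊓ Uᗮ := ⟨hmem2, hmem⟩
    rw [hU] at this
    have : (u : V) = 0 := hJinj _ (by simpa using this)
    exact hu (Subtype.ext this)
  -- Step 2: reduce to inner product on U
  have key := Submodule.inner_orthogonalProjectionOnto_eq_of_mem_right (𝕜 := ℝ) (K := U)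
    (Rinv (Gop U u)) (Jmul V (u : V))
  rw [← key]
  show (0 : ℝ) < ⟪Gop U u, Rinv (Gop U u)⟫
  -- Step 3: Rinv is positive definite
  set w := Gop U u with hw
  have hRw : R (Rinv w) = w := congrFun (congrArg DFunLike.coe hRinv.2) w
  have hx : Rinv w ≠ 0 := by
    intro h
    rw [h, map_zero] at hRw
    exact hGu hRw.symm
  have := hRpos (Rinv w) hx
  rw [hRw] at this
  exact this
end
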